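/- arXiv:2110.12209 — 4 statements merged into one kernel-verified Lean document; each statement's English description precedes it below -/
import Mathlib

section
/- Let (M_k) be a sequence of positive reals with M_0 = 1 and suppose there exist A ≥ 1 and H > 0 with M_{2k} ≤ A H^{2k} M_k^2 for all k ∈ ℕ (condition (M.2)). Define, for a fixed integer ν ≥ 1, the associated function 𝓜(r) = sup_{k ≥ 1} log(r^{νk} / M_{νk}) for r > 0 and 𝓜(0) = 0. Then for every L > 0 and every r ≥ 0, one has (1/2)·𝓜(L r) ≥ 𝓜(L̃ r) where L̃ = L / (√A · H), provided 𝓜(Lr) and 𝓜(L̃ r) are finite. -/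
/-!
Under (M.2), squaring the term `(r / (√A H))^n / M_n` of the supremum defining `𝓜` gives at most
the term `r^(2n) / M_{2n}`, since `M_{2n} ≤ A H^{2n} M_n^2 ≤ (√A H)^{2n} M_n^2` for `n ≥ 1`.
Taking logarithms, every term of `𝓜(L̃ r)` is at most half a term of `𝓜(L r)` (the one of index
`2k`), and the inequality passes to the suprema.
-/

open Real

theorem csSup_le_mul_csSup {S T : Set ℝ} {c : ℝ} (hS : S.Nonempty) (hT : BddAbove T) (hc : 0 ≤ c)
    (h : ∀ x ∈ S, ∃ y ∈ T, x ≤ c * y) : sSup S ≤ c * sSup T := by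
  refine csSup_le hS fun x hx => ?_
  obtain ⟨y, hy, hxy⟩ := h x hx
  exact hxy.trans (mul_le_mul_of_nonneg_left (le_csSup hT hy) hc)

section WeightSequence

variable {M : ℕ → ℝ} {A H : ℝ} {n : ℕ}

theorem sq_pow_div_le_of_M2 (hpos : ∀ k, 0 < M k) (hA : 1 ≤ A) (hH : 0 < H)
    (hM2 : M (2 * n) ≤ A * H ^ (2 * n) * M n ^ 2) (hn : n ≠ 0) {t : ℝ} (ht : 0 ≤ t) :
    ((t / (√A * H)) ^ n / M n) ^ 2 ≤ t ^ (2 * n) / M (2 * n) := by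
  have hM2' : M (2 * n) ≤ A ^ n * H ^ (2 * n) * M n ^ 2 := by
    calc M (2 * n) ≤ A * H ^ (2 * n) * M n ^ 2 := hM2
      _ ≤ A ^ n * H ^ (2 * n) * M n ^ 2 := by
        have := hpos n
        gcongr
        exact le_self_pow₀ hA hn
  have hscale : (√A * H) ^ (2 * n) = A ^ n * H ^ (2 * n) := by
    rw [mul_pow, pow_mul, sq_sqrt (zero_le_one.trans hA)]
  calc ((t / (√A * H)) ^ n / M n) ^ 2 = t ^ (2 * n) / (A ^ n * H ^ (2 * n) * M n ^ 2) := by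
        rw [div_pow, ← pow_mul, div_pow, mul_comm n 2, hscale, div_div]
    _ ≤ t ^ (2 * n) / M (2 * n) := by
        have := hpos (2 * n)
        gcongr

theorem two_mul_log_pow_div_le_of_M2 (hpos : ∀ k, 0 < M k) (hA : 1 ≤ A) (hH : 0 < H)
    (hM2 : M (2 * n) ≤ A * H ^ (2 * n) * M n ^ 2) (hn : n ≠ 0) {t : ℝ} (ht : 0 < t) :
    2 * log ((t / (√A * H)) ^ n / M n) ≤ log (t ^ (2 * n) / M (2 * n)) := by
  have hterm : 0 < (t / (√A * H)) ^ n / M n := by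
    have := hpos n
    have : 0 < √A := sqrt_pos.mpr (zero_lt_one.trans_le hA)
    positivity
  rw [← Nat.cast_ofNat, ← log_pow]
  exact log_le_log (pow_pos hterm 2) (sq_pow_div_le_of_M2 hpos hA hH hM2 hn ht.le)

end WeightSequence

theorem stmt_1_general (M : ℕ → ℝ) (hpos : ∀ k, 0 < M k)
    (A H : ℝ) (hA : 1 ≤ A) (hH : 0 < H)
    (hM2 : ∀ k : ℕ, M (2 * k) ≤ A * H ^ (2 * k) * (M k) ^ 2)
    (ν : ℕ) (hν : 1 ≤ ν)
    (MM : ℝ → ℝ) (hMM0 : MM 0 = 0)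
    (hMM : ∀ r : ℝ, 0 < r →
      MM r = sSup {x : ℝ | ∃ k : ℕ, 1 ≤ k ∧ x = Real.log (r ^ (ν * k) / M (ν * k))}) :
    ∀ L : ℝ, 0 < L → ∀ r : ℝ, 0 ≤ r →
      BddAbove {x : ℝ | ∃ k : ℕ, 1 ≤ k ∧ x = Real.log ((L * r) ^ (ν * k) / M (ν * k))} →
      BddAbove {x : ℝ | ∃ k : ℕ, 1 ≤ k ∧
        x = Real.log ((L / (Real.sqrt A * H) * r) ^ (ν * k) / M (ν * k))} →
      MM (L / (Real.sqrt A * H) * r) ≤ (1 / 2) * MM (L * r) := by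
  intro L hL r hr hbdd _
  rcases hr.eq_or_lt with rfl | hr
  · simp [hMM0]
  have ht : 0 < L * r := mul_pos hL hr
  have hs : 0 < L / (√A * H) * r :=
    mul_pos (div_pos hL (mul_pos (sqrt_pos.mpr (zero_lt_one.trans_le hA)) hH)) hr
  rw [hMM _ hs, hMM _ ht, div_mul_eq_mul_div]
  refine csSup_le_mul_csSup ⟨_, 1, le_rfl, rfl⟩ hbdd (by norm_num) ?_
  rintro _ ⟨k, hk, rfl⟩
  refine ⟨_, ⟨2 * k, by omega, rfl⟩, ?_⟩
  have hn : ν * k ≠ 0 := by positivity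
  have := two_mul_log_pow_div_le_of_M2 hpos hA hH (hM2 (ν * k)) hn ht
  rw [mul_left_comm] at this
  linarith

/-- Halving property of the associated function under condition (M.2). -/
theorem stmt_1 (M : ℕ → ℝ) (hpos : ∀ k, 0 < M k) (h0 : M 0 = 1)
    (A H : ℝ) (hA : 1 ≤ A) (hH : 0 < H)
    (hM2 : ∀ k : ℕ, M (2 * k) ≤ A * H ^ (2 * k) * (M k) ^ 2)
    (ν : ℕ) (hν : 1 ≤ ν)
    (MM : ℝ → ℝ) (hMM0 : MM 0 = 0)
    (hMM : ∀ r : ℝ, 0 < r →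
      MM r = sSup {x : ℝ | ∃ k : ℕ, 1 ≤ k ∧ x = Real.log (r ^ (ν * k) / M (ν * k))}) :
    ∀ L : ℝ, 0 < L → ∀ r : ℝ, 0 ≤ r →
      BddAbove {x : ℝ | ∃ k : ℕ, 1 ≤ k ∧ x = Real.log ((L * r) ^ (ν * k) / M (ν * k))} →
      BddAbove {x : ℝ | ∃ k : ℕ, 1 ≤ k ∧
        x = Real.log ((L / (Real.sqrt A * H) * r) ^ (ν * k) / M (ν * k))} →
      MM (L / (Real.sqrt A * H) * r) ≤ (1 / 2) * MM (L * r) :=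
  stmt_1_general M hpos A H hA hH hM2 ν hν MM hMM0 hMM
end

section
/- (Abstract sufficiency, Beurling case.) Let (λ_ℓ) be nonnegative reals tending to infinity, and let 𝓜 : [0,∞) → ℝ be non-decreasing with 𝓜(0)=0 and the halving property: for some fixed constants A ≥ 1, H > 0 and for every L > 0, exp(−𝓜(L√A H t)) ≤ exp(−2𝓜(L t)) for all t ≥ 0. Let σ(ℓ) be endomorphisms of finite-dimensional complex inner-product spaces V_ℓ with m(σ(ℓ)) ≥ K exp(−𝓜(r λ_ℓ)) for all ℓ ≥ C, for some positive constants K, r, C. Suppose σ(ℓ) u_ℓ = φ_ℓ for all ℓ, and for every L' > 0 there is C_{L'} > 0 with ‖φ_ℓ‖ ≤ C_{L'} exp(−𝓜(L' λ_ℓ)) for all ℓ. Then for every L > 0 there is C_L > 0 with ‖u_ℓ‖ ≤ C_L exp(−𝓜(L λ_ℓ)) for all ℓ ≥ C. -/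
/-- Abstract sufficiency, Beurling case. -/
theorem stmt_9 (A H : ℝ) (hA : 1 ≤ A) (hH : 0 < H)
    (lam : ℕ → ℝ) (hlam0 : ∀ ℓ, 0 ≤ lam ℓ)
    (hlamtop : Filter.Tendsto lam Filter.atTop Filter.atTop)
    (MM : ℝ → ℝ) (hMMmono : MonotoneOn MM (Set.Ici 0)) (hMM0 : MM 0 = 0)
    (hhalf : ∀ L : ℝ, 0 < L → ∀ t : ℝ, 0 ≤ t →
      Real.exp (-(MM (L * Real.sqrt A * H * t))) ≤ Real.exp (-(2 * MM (L * t))))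
    (V : ℕ → Type*) [∀ ℓ, NormedAddCommGroup (V ℓ)]
    [∀ ℓ, InnerProductSpace ℂ (V ℓ)] [∀ ℓ, FiniteDimensional ℂ (V ℓ)]
    (σ : ∀ ℓ, V ℓ →L[ℂ] V ℓ) (mσ : ℕ → ℝ)
    (hmσ : ∀ ℓ, mσ ℓ = sInf {r : ℝ | ∃ v : V ℓ, ‖v‖ = 1 ∧ r = ‖σ ℓ v‖})
    (K r C : ℝ) (hK : 0 < K) (hr : 0 < r) (hC : 0 < C)
    (hsymb : ∀ ℓ : ℕ, C ≤ (ℓ : ℝ) → K * Real.exp (-(MM (r * lam ℓ))) ≤ mσ ℓ)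
    (u φ : ∀ ℓ, V ℓ) (hEq : ∀ ℓ, σ ℓ (u ℓ) = φ ℓ)
    (hφ : ∀ L' : ℝ, 0 < L' → ∃ C' : ℝ, 0 < C' ∧
      ∀ ℓ, ‖φ ℓ‖ ≤ C' * Real.exp (-(MM (L' * lam ℓ)))) :
    ∀ L : ℝ, 0 < L → ∃ CL : ℝ, 0 < CL ∧
      ∀ ℓ : ℕ, C ≤ (ℓ : ℝ) → ‖u ℓ‖ ≤ CL * Real.exp (-(MM (L * lam ℓ))) := by

  intro L hL
  have hL0 : (0:ℝ) < max L r := lt_max_of_lt_left hL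
  have hsA : 0 < Real.sqrt A := Real.sqrt_pos.mpr (lt_of_lt_of_le one_pos hA)
  have hL' : 0 < max L r * Real.sqrt A * H := by positivity
  obtain ⟨C', hC', hφ'⟩ := hφ (max L r * Real.sqrt A * H) hL'
  refine ⟨C' / K, div_pos hC' hK, ?_⟩
  intro ℓ hℓ
  have hlamn := hlam0 ℓ
  have h2 : 2 * MM (max L r * lam ℓ) ≤ MM (max L r * Real.sqrt A * H * lam ℓ) := by
    have h := hhalf (max L r) hL0 (lam ℓ) hlamn
    rw [Real.exp_le_exp, neg_le_neg_iff] at h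
    exact h
  have hM1 : MM (L * lam ℓ) ≤ MM (max L r * lam ℓ) :=
    hMMmono (mul_nonneg hL.le hlamn) (mul_nonneg hL0.le hlamn)
      (mul_le_mul_of_nonneg_right (le_max_left _ _) hlamn)
  have hM2 : MM (r * lam ℓ) ≤ MM (max L r * lam ℓ) :=
    hMMmono (mul_nonneg hr.le hlamn) (mul_nonneg hL0.le hlamn)
      (mul_le_mul_of_nonneg_right (le_max_right _ _) hlamn)
  have hsum : MM (L * lam ℓ) + MM (r * lam ℓ) ≤ MM (max L r * Real.sqrt A * H * lam ℓ) := by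
    linarith
  -- key: mσ ℓ * ‖u ℓ‖ ≤ ‖φ ℓ‖
  have hkey : mσ ℓ * ‖u ℓ‖ ≤ ‖φ ℓ‖ := by
    rcases eq_or_ne (u ℓ) 0 with h0 | h0
    · simp [h0]
    · have hn : 0 < ‖u ℓ‖ := norm_pos_iff.mpr h0
      have hv : ‖((‖u ℓ‖⁻¹ : ℝ) : ℂ) • u ℓ‖ = 1 := by
        rw [norm_smul]
        simp [abs_of_pos (inv_pos.mpr hn), inv_mul_cancel₀ hn.ne']
      have hbdd : BddBelow {s : ℝ | ∃ v : V ℓ, ‖v‖ = 1 ∧ s = ‖σ ℓ v‖} := by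
        refine ⟨0, ?_⟩
        rintro s ⟨v, -, rfl⟩
        exact norm_nonneg _
      have hmem : ‖σ ℓ (((‖u ℓ‖⁻¹ : ℝ) : ℂ) • u ℓ)‖ ∈
          {s : ℝ | ∃ v : V ℓ, ‖v‖ = 1 ∧ s = ‖σ ℓ v‖} := ⟨_, hv, rfl⟩
      have hle : mσ ℓ ≤ ‖σ ℓ (((‖u ℓ‖⁻¹ : ℝ) : ℂ) • u ℓ)‖ := by
        rw [hmσ]; exact csInf_le hbdd hmem
      have hσs : ‖σ ℓ (((‖u ℓ‖⁻¹ : ℝ) : ℂ) • u ℓ)‖ = ‖u ℓ‖⁻¹ * ‖φ ℓ‖ := by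
        rw [map_smul, norm_smul, hEq]
        simp [abs_of_pos (inv_pos.mpr hn)]
      rw [hσs] at hle
      calc mσ ℓ * ‖u ℓ‖ ≤ (‖u ℓ‖⁻¹ * ‖φ ℓ‖) * ‖u ℓ‖ :=
            mul_le_mul_of_nonneg_right hle (norm_nonneg _)
        _ = ‖φ ℓ‖ := by field_simp
  have hchain : K * Real.exp (-(MM (r * lam ℓ))) * ‖u ℓ‖ ≤
      C' * Real.exp (-(MM (L * lam ℓ))) * Real.exp (-(MM (r * lam ℓ))) := by
    calc K * Real.exp (-(MM (r * lam ℓ))) * ‖u ℓ‖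
        ≤ mσ ℓ * ‖u ℓ‖ := mul_le_mul_of_nonneg_right (hsymb ℓ hℓ) (norm_nonneg _)
      _ ≤ ‖φ ℓ‖ := hkey
      _ ≤ C' * Real.exp (-(MM (max L r * Real.sqrt A * H * lam ℓ))) := hφ' ℓ
      _ ≤ C' * Real.exp (-(MM (L * lam ℓ) + MM (r * lam ℓ))) := by
          gcongr
      _ = C' * Real.exp (-(MM (L * lam ℓ))) * Real.exp (-(MM (r * lam ℓ))) := by
          rw [neg_add, Real.exp_add, mul_assoc]
  have her : 0 < Real.exp (-(MM (r * lam ℓ))) := Real.exp_pos _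
  have hKu : K * ‖u ℓ‖ ≤ C' * Real.exp (-(MM (L * lam ℓ))) := by
    have := (mul_le_mul_iff_of_pos_right her).mp (by linarith [hchain] :
      K * ‖u ℓ‖ * Real.exp (-(MM (r * lam ℓ))) ≤
      C' * Real.exp (-(MM (L * lam ℓ))) * Real.exp (-(MM (r * lam ℓ))))
    exact this
  rw [div_mul_eq_mul_div, le_div_iff₀ hK]
  linarith
end

section
/- (Abstract necessity, Beurling case.) Let λ_ℓ ≥ 0 be non-decreasing with λ_0 = 0, and 𝓜 : [0,∞) → ℝ non-decreasing with 𝓜(0) = 0. Suppose that for all positive constants K, r, C there exists ℓ > C with m(σ(ℓ)) < K exp(−𝓜(r λ_ℓ)). Then there exist a strictly increasing sequence of indices (ℓ_k)_{k≥1} and unit vectors v_{ℓ_k} ∈ V_{ℓ_k} with ‖σ(ℓ_k) v_{ℓ_k}‖ < exp(−𝓜(k λ_{ℓ_k})) for every k ∈ ℕ. Moreover, for the sequence u defined by u_{ℓ_k} = v_{ℓ_k} and u_ℓ = 0 otherwise: (i) ‖u_ℓ‖ ≤ exp(𝓜(λ_ℓ)) for all ℓ; (ii) ‖u_{ℓ_k}‖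 = 1 for all k; (iii) for every L > 0 there is C_L > 0 with ‖σ(ℓ) u_ℓ‖ ≤ C_L exp(−𝓜(L λ_ℓ)) for all ℓ. -/
/-!
Taking `K = 1`, `r = k + 1` in the failure hypothesis shows that for every `k` there are arbitrarily
large `ℓ` carrying a unit vector `v` with `‖σ ℓ v‖ < exp (-𝓜 (k λ_ℓ))`; a diagonal extraction picks
one such `ℓ_k` for each `k`, strictly increasing. Since `𝓜 ≥ 0`, `exp 𝓜(λ_ℓ) ≥ 1`, so unit vectors
meet the growth bound. For fixed `L`, all `k ≥ L` satisfy `‖σ(ℓ_k) v_{ℓ_k}‖ ≤ exp (-𝓜 (L λ_{ℓ_k}))` by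
monotonicity of `𝓜`, so the decay bound holds for all large `ℓ` and the finitely many remaining
indices are absorbed into the constant `C_L`.
-/

open Filter Real Set Asymptotics

section ExtendByZero

variable {ι κ : Type*} {β : κ → Type*} [∀ j, Zero (β j)]

/-- The dependent analogue of `Function.extend e v 0`. -/
noncomputable def extendByZero (e : ι → κ) (v : ∀ i, β (e i)) (j : κ) : β j := by
  classical
  exact if h : ∃ i, e i = j then h.choose_spec ▸ v h.choose else 0

theorem extendByZero_apply (e : ι → κ) (he : e.Injective) (v : ∀ i, β (e i)) (i : ι) :
    extendByZero e v (e i) = v i := by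
  have h : ∃ i', e i' = e i := ⟨i, rfl⟩
  have hcast : ∀ i' (p : e i' = e i), i' = i → (p ▸ v i' : β (e i)) = v i := by
    rintro _ _ rfl
    rfl
  simp only [extendByZero, dif_pos h]
  exact hcast _ h.choose_spec (he h.choose_spec)

theorem extendByZero_apply_of_notMem_range (e : ι → κ) (v : ∀ i, β (e i)) {j : κ}
    (hj : ∀ i, e i ≠ j) : extendByZero e v j = 0 := by
  simp only [extendByZero, dif_neg (not_exists.2 hj)]

theorem extendByZero_mem (e : ι → κ) (v : ∀ i, β (e i)) {s : ∀ j, Set (β j)}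
    (hv : ∀ i, v i ∈ s (e i)) (h0 : ∀ j, 0 ∈ s j) (j : κ) : extendByZero e v j ∈ s j := by
  have hcast : ∀ i (p : e i = j), (p ▸ v i : β j) ∈ s j := by
    rintro i rfl
    exact hv i
  unfold extendByZero
  split_ifs with h
  · exact hcast _ h.choose_spec
  · exact h0 j

end ExtendByZero

theorem exists_norm_eq_one_lt_of_sInf_lt {E : Type*} [NormedAddCommGroup E] [NormedSpace ℝ E]
    [Nontrivial E] {f : E → ℝ} {c : ℝ} (h : sInf {r | ∃ v : E, ‖v‖ = 1 ∧ r = f v} < c) :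
    ∃ v : E, ‖v‖ = 1 ∧ f v < c := by
  set S := {r | ∃ v : E, ‖v‖ = 1 ∧ r = f v}
  obtain ⟨w, hw⟩ := exists_norm_eq E zero_le_one
  obtain ⟨_, ⟨v, hv, rfl⟩, hvc⟩ := exists_lt_of_csInf_lt (s := S) ⟨f w, w, hw, rfl⟩ h
  exact ⟨v, hv, hvc⟩

theorem exp_neg_comp_mul_le {M : ℝ → ℝ} (hM : MonotoneOn M (Ici 0)) {s t x : ℝ} (hs : 0 ≤ s)
    (hst : s ≤ t) (hx : 0 ≤ x) : exp (-M (t * x)) ≤ exp (-M (s * x)) :=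
  exp_le_exp.2 <| neg_le_neg <| hM (mul_nonneg hs hx) (mul_nonneg (hs.trans hst) hx)
    (mul_le_mul_of_nonneg_right hst hx)

theorem exists_pos_forall_le_mul_of_eventually_le {f g : ℕ → ℝ} (hf : ∀ n, 0 ≤ f n)
    (hg : ∀ n, 0 < g n) (h : ∀ᶠ n in atTop, f n ≤ g n) : ∃ C > 0, ∀ n, f n ≤ C * g n := by
  have hfg : f =O[atTop] g := .of_bound' <| h.mono fun n hn => by
    rwa [norm_of_nonneg (hf n), norm_of_nonneg (hg n).le]
  obtain ⟨C, hC, hbound⟩ := bound_of_isBigO_nat_atTop hfg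
  refine ⟨C, hC, fun n => ?_⟩
  simpa only [norm_of_nonneg (hf n), norm_of_nonneg (hg n).le] using hbound (hg n).ne'

theorem stmt_10_general (lam : ℕ → ℝ) (hlam0 : ∀ ℓ, 0 ≤ lam ℓ)
    (MM : ℝ → ℝ) (hMMmono : MonotoneOn MM (Set.Ici 0))
    (hMMnn : ∀ t : ℝ, 0 ≤ t → 0 ≤ MM t)
    (V : ℕ → Type*) [∀ ℓ, NormedAddCommGroup (V ℓ)]
    [∀ ℓ, InnerProductSpace ℂ (V ℓ)]
    [∀ ℓ, Nontrivial (V ℓ)]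
    (σ : ∀ ℓ, V ℓ →L[ℂ] V ℓ) (mσ : ℕ → ℝ)
    (hmσ : ∀ ℓ, mσ ℓ = sInf {r : ℝ | ∃ v : V ℓ, ‖v‖ = 1 ∧ r = ‖σ ℓ v‖})
    (hfail : ∀ K r C : ℝ, 0 < K → 0 < r → 0 < C →
      ∃ ℓ : ℕ, C < (ℓ : ℝ) ∧ mσ ℓ < K * Real.exp (-(MM (r * lam ℓ)))) :
    ∃ e : ℕ → ℕ, StrictMono e ∧
      ∃ v : ∀ k, V (e k),
        (∀ k : ℕ, 1 ≤ k → ‖v k‖ = 1) ∧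
        (∀ k : ℕ, 1 ≤ k →
          ‖σ (e k) (v k)‖ < Real.exp (-(MM ((k : ℝ) * lam (e k))))) ∧
        ∃ u : ∀ ℓ, V ℓ,
          (∀ k : ℕ, 1 ≤ k → u (e k) = v k) ∧
          (∀ ℓ, (∀ k : ℕ, 1 ≤ k → ℓ ≠ e k) → u ℓ = 0) ∧
          (∀ ℓ, ‖u ℓ‖ ≤ Real.exp (MM (lam ℓ))) ∧
          (∀ k : ℕ, 1 ≤ k → ‖u (e k)‖ = 1) ∧
          (∀ L : ℝ, 0 < L → ∃ CL : ℝ, 0 < CL ∧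
            ∀ ℓ, ‖σ ℓ (u ℓ)‖ ≤ CL * Real.exp (-(MM (L * lam ℓ)))) := by
  have hfreq : ∀ k : ℕ, ∃ᶠ ℓ in atTop,
      ∃ v : V ℓ, ‖v‖ = 1 ∧ ‖σ ℓ v‖ < exp (-MM (k * lam ℓ)) := by
    refine fun k => frequently_atTop'.2 fun n => ?_
    obtain ⟨ℓ, hnℓ, hℓ⟩ := hfail 1 (k + 1) (n + 1) one_pos (by positivity) (by positivity)
    rw [hmσ, one_mul] at hℓ
    obtain ⟨v, hv, hσv⟩ := exists_norm_eq_one_lt_of_sInf_lt hℓ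
    refine ⟨ℓ, by exact_mod_cast (lt_add_one (n : ℝ)).trans hnℓ, v, hv, hσv.trans_le ?_⟩
    exact exp_neg_comp_mul_le hMMmono k.cast_nonneg (lt_add_one _).le (hlam0 ℓ)
  obtain ⟨e, he, hev⟩ := extraction_forall_of_frequently hfreq
  choose v hv1 hv2 using hev
  -- `u` has to vanish at `e 0`, so it extends `v` along the indices `k ≥ 1` only.
  set e₁ : {k : ℕ // 1 ≤ k} → ℕ := fun k => e k
  set u := extendByZero e₁ fun k => v k
  have hue : ∀ k, 1 ≤ k → u (e k) = v k := fun k hk =>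
    extendByZero_apply e₁ (he.injective.comp Subtype.val_injective) _ ⟨k, hk⟩
  have hu0 : ∀ ℓ, (∀ k : ℕ, 1 ≤ k → ℓ ≠ e k) → u ℓ = 0 := fun ℓ hℓ =>
    extendByZero_apply_of_notMem_range _ _ fun k => (hℓ k k.2).symm
  refine ⟨e, he, v, fun k _ => hv1 k, fun k _ => hv2 k, u, hue, hu0, fun ℓ => ?_,
    fun k hk => hue k hk ▸ hv1 k, fun L hL => ?_⟩
  · refine extendByZero_mem e₁ _ (s := fun ℓ => {x | ‖x‖ ≤ exp (MM (lam ℓ))})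
      (fun k => ?_) (fun ℓ => ?_) ℓ
    · exact (hv1 k).trans_le (one_le_exp (hMMnn _ (hlam0 _)))
    · exact norm_zero.trans_le (exp_pos _).le
  · have hevent : ∀ᶠ ℓ in atTop, ‖σ ℓ (u ℓ)‖ ≤ exp (-MM (L * lam ℓ)) := by
      filter_upwards [eventually_ge_atTop (e ⌈L⌉₊)] with ℓ hℓ
      refine extendByZero_mem e₁ _
        (s := fun ℓ => {x | e ⌈L⌉₊ ≤ ℓ → ‖σ ℓ x‖ ≤ exp (-MM (L * lam ℓ))})
        (fun k hk => (hv2 k).le.trans ?_) (fun ℓ _ => ?_) ℓ hℓ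
      · exact exp_neg_comp_mul_le hMMmono hL.le
          ((Nat.le_ceil L).trans (by exact_mod_cast he.le_iff_le.1 hk)) (hlam0 _)
      · simpa using (exp_pos _).le
    exact exists_pos_forall_le_mul_of_eventually_le (fun _ => norm_nonneg _) (fun _ => exp_pos _)
      hevent

/-- Abstract necessity, Beurling case. -/
theorem stmt_10 (lam : ℕ → ℝ) (hlam0 : ∀ ℓ, 0 ≤ lam ℓ)
    (hlammono : Monotone lam) (hlamzero : lam 0 = 0)
    (hlamtop : Filter.Tendsto lam Filter.atTop Filter.atTop)
    (MM : ℝ → ℝ) (hMMmono : MonotoneOn MM (Set.Ici 0)) (hMM0 : MM 0 = 0)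
    (hMMnn : ∀ t : ℝ, 0 ≤ t → 0 ≤ MM t)
    (V : ℕ → Type*) [∀ ℓ, NormedAddCommGroup (V ℓ)]
    [∀ ℓ, InnerProductSpace ℂ (V ℓ)] [∀ ℓ, FiniteDimensional ℂ (V ℓ)]
    [∀ ℓ, Nontrivial (V ℓ)]
    (σ : ∀ ℓ, V ℓ →L[ℂ] V ℓ) (mσ : ℕ → ℝ)
    (hmσ : ∀ ℓ, mσ ℓ = sInf {r : ℝ | ∃ v : V ℓ, ‖v‖ = 1 ∧ r = ‖σ ℓ v‖})
    (hfail : ∀ K r C : ℝ, 0 < K → 0 < r → 0 < C →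
      ∃ ℓ : ℕ, C < (ℓ : ℝ) ∧ mσ ℓ < K * Real.exp (-(MM (r * lam ℓ)))) :
    ∃ e : ℕ → ℕ, StrictMono e ∧
      ∃ v : ∀ k, V (e k),
        (∀ k : ℕ, 1 ≤ k → ‖v k‖ = 1) ∧
        (∀ k : ℕ, 1 ≤ k →
          ‖σ (e k) (v k)‖ < Real.exp (-(MM ((k : ℝ) * lam (e k))))) ∧
        ∃ u : ∀ ℓ, V ℓ,
          (∀ k : ℕ, 1 ≤ k → u (e k) = v k) ∧
          (∀ ℓ, (∀ k : ℕ, 1 ≤ k → ℓ ≠ e k) → u ℓ = 0) ∧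
          (∀ ℓ, ‖u ℓ‖ ≤ Real.exp (MM (lam ℓ))) ∧
          (∀ k : ℕ, 1 ≤ k → ‖u (e k)‖ = 1) ∧
          (∀ L : ℝ, 0 < L → ∃ CL : ℝ, 0 < CL ∧
            ∀ ℓ, ‖σ ℓ (u ℓ)‖ ≤ CL * Real.exp (-(MM (L * lam ℓ)))) :=
  stmt_10_general lam hlam0 MM hMMmono hMMnn V σ mσ hmσ hfail
end

section
/- Suppose k! ≤ C L^k M_k for all k (with C, L > 0) and ν ≥ 1 is a fixed integer. Then exp(𝓜(r)) grows faster than any polynomial: for every N > 0, exp(𝓜(r)) / r^N → ∞ as r → ∞, where 𝓜(r) = sup_{k≥1} log(r^{νk}/M_{νk}). Equivalently, for every N > 0 there is R_N with exp(−𝓜(r)) ≤ r^{−N} for all r ≥ R_N. -/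
/-!
Since `M n ≥ n! / (C Lⁿ)`, the sequence `rⁿ / M n` is dominated by `C (L r)ⁿ / n!`, which tends to `0`;
so the supremum defining `𝓜 r` is finite and `exp (𝓜 r) ≥ r^(ν k) / M (ν k)` for every `k ≥ 1`.
Taking `k` with `ν k > N` gives `exp (𝓜 r) / r^N ≥ r^(ν k - N) / M (ν k) → ∞`.
-/

open Filter Set Real

section WeightSequence

variable {M : ℕ → ℝ} {C L : ℝ}

lemma pow_div_le_of_factorial_le (hpos : ∀ k, 0 < M k)
    (hfact : ∀ k : ℕ, (k.factorial : ℝ) ≤ C * L ^ k * M k) {r : ℝ} (hr : 0 ≤ r) (n : ℕ) :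
    r ^ n / M n ≤ C * (L * r) ^ n / n.factorial := by
  rw [div_le_div_iff₀ (hpos n) (by positivity), mul_pow]
  calc r ^ n * n.factorial ≤ r ^ n * (C * L ^ n * M n) :=
        mul_le_mul_of_nonneg_left (hfact n) (pow_nonneg hr n)
    _ = C * (L ^ n * r ^ n) * M n := by ring

lemma bddAbove_range_pow_div_of_factorial_le (hpos : ∀ k, 0 < M k)
    (hfact : ∀ k : ℕ, (k.factorial : ℝ) ≤ C * L ^ k * M k) {r : ℝ} (hr : 0 ≤ r) :
    BddAbove (range fun n => r ^ n / M n) := by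
  have hlim : Tendsto (fun n => C * (L * r) ^ n / n.factorial) atTop (nhds 0) := by
    simpa only [mul_div_assoc, mul_zero] using
      (FloorSemiring.tendsto_pow_div_factorial_atTop (L * r)).const_mul C
  obtain ⟨B, hB⟩ := hlim.bddAbove_range
  exact ⟨B, forall_mem_range.2 fun n =>
    (pow_div_le_of_factorial_le hpos hfact hr n).trans (hB (mem_range_self n))⟩

lemma pow_div_le_exp_sSup_log (hpos : ∀ k, 0 < M k)
    (hfact : ∀ k : ℕ, (k.factorial : ℝ) ≤ C * L ^ k * M k) (ν : ℕ) {r : ℝ} (hr : 0 < r)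
    {k : ℕ} (hk : 1 ≤ k) :
    r ^ (ν * k) / M (ν * k) ≤
      exp (sSup {x : ℝ | ∃ k : ℕ, 1 ≤ k ∧ x = log (r ^ (ν * k) / M (ν * k))}) := by
  have hq : ∀ n, 0 < r ^ n / M n := fun n => div_pos (pow_pos hr n) (hpos n)
  obtain ⟨B, hB⟩ := bddAbove_range_pow_div_of_factorial_le hpos hfact hr.le
  have hbdd : BddAbove {x : ℝ | ∃ k : ℕ, 1 ≤ k ∧ x = log (r ^ (ν * k) / M (ν * k))} := by
    refine ⟨log B, ?_⟩
    rintro x ⟨j, -, rfl⟩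
    exact log_le_log (hq _) (hB (mem_range_self _))
  rw [← exp_log (hq (ν * k))]
  exact exp_le_exp.2 (le_csSup hbdd ⟨k, hk, rfl⟩)

end WeightSequence

lemma tendsto_div_rpow_atTop_of_pow_div_le {f : ℝ → ℝ} {N : ℝ} {n : ℕ} (hN : N < n)
    {m : ℝ} (hm : 0 < m) (hf : ∀ᶠ r in atTop, r ^ n / m ≤ f r) :
    Tendsto (fun r => f r / r ^ N) atTop atTop := by
  have hlim : Tendsto (fun r : ℝ => r ^ ((n : ℝ) - N) / m) atTop atTop :=
    (tendsto_rpow_atTop (sub_pos.2 hN)).atTop_div_const hm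
  refine tendsto_atTop_mono' _ ?_ hlim
  filter_upwards [hf, eventually_gt_atTop 0] with r hfr hr
  calc r ^ ((n : ℝ) - N) / m = r ^ n / m / r ^ N := by
        rw [rpow_sub hr, rpow_natCast]; ring
    _ ≤ f r / r ^ N := by gcongr

lemma exists_exp_neg_le_rpow_neg_of_tendsto {g : ℝ → ℝ} {N : ℝ}
    (h : Tendsto (fun r => exp (g r) / r ^ N) atTop atTop) :
    ∃ R : ℝ, ∀ r : ℝ, R ≤ r → exp (-g r) ≤ r ^ (-N) := by
  obtain ⟨R, hR⟩ := eventually_atTop.1 ((h.eventually_ge_atTop 1).and (eventually_gt_atTop 0))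
  refine ⟨R, fun r hr => ?_⟩
  obtain ⟨hge, hr0⟩ := hR r hr
  have hrN : 0 < r ^ N := rpow_pos_of_pos hr0 N
  rw [exp_neg, rpow_neg hr0.le]
  exact inv_anti₀ hrN ((one_le_div hrN).1 hge)

theorem stmt_15_general (M : ℕ → ℝ) (hpos : ∀ k, 0 < M k)
    (ν : ℕ) (hν : 1 ≤ ν)
    (C L : ℝ)
    (hfact : ∀ k : ℕ, (k.factorial : ℝ) ≤ C * L ^ k * M k)
    (MM : ℝ → ℝ)
    (hMM : ∀ r : ℝ, 0 < r →
      MM r = sSup {x : ℝ | ∃ k : ℕ, 1 ≤ k ∧ x = Real.log (r ^ (ν * k) / M (ν * k))}) :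
    (∀ N : ℝ, 0 < N →
      Filter.Tendsto (fun r : ℝ => Real.exp (MM r) / r ^ N)
        Filter.atTop Filter.atTop) ∧
    ∀ N : ℝ, 0 < N → ∃ R : ℝ, ∀ r : ℝ, R ≤ r →
      Real.exp (-(MM r)) ≤ r ^ (-N) := by
  have hgrowth : ∀ N : ℝ, Tendsto (fun r : ℝ => exp (MM r) / r ^ N) atTop atTop := by
    intro N
    set k := ⌈N⌉₊ + 1
    have hN : N < ((ν * k : ℕ) : ℝ) := by
      have hk : (k : ℝ) ≤ ((ν * k : ℕ) : ℝ) := by exact_mod_cast Nat.le_mul_of_pos_left k hν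
      have hNk : N < k := by push_cast [k]; linarith [Nat.le_ceil N]
      linarith
    refine tendsto_div_rpow_atTop_of_pow_div_le hN (hpos (ν * k)) ?_
    filter_upwards [eventually_gt_atTop 0] with r hr
    rw [hMM r hr]
    exact pow_div_le_exp_sSup_log hpos hfact ν hr (Nat.le_add_left 1 _)
  exact ⟨fun N _ => hgrowth N, fun N _ => exists_exp_neg_le_rpow_neg_of_tendsto (hgrowth N)⟩

/-- `exp (𝓜 r)` grows faster than any polynomial. -/
theorem stmt_15 (M : ℕ → ℝ) (hpos : ∀ k, 0 < M k)
    (ν : ℕ) (hν : 1 ≤ ν)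
    (C L : ℝ) (hC : 0 < C) (hL : 0 < L)
    (hfact : ∀ k : ℕ, (k.factorial : ℝ) ≤ C * L ^ k * M k)
    (MM : ℝ → ℝ)
    (hMM : ∀ r : ℝ, 0 < r →
      MM r = sSup {x : ℝ | ∃ k : ℕ, 1 ≤ k ∧ x = Real.log (r ^ (ν * k) / M (ν * k))}) :
    (∀ N : ℝ, 0 < N →
      Filter.Tendsto (fun r : ℝ => Real.exp (MM r) / r ^ N)
        Filter.atTop Filter.atTop) ∧
    ∀ N : ℝ, 0 < N → ∃ R : ℝ, ∀ r : ℝ, R ≤ r →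
      Real.exp (-(MM r)) ≤ r ^ (-N) :=
  stmt_15_general M hpos ν hν C L hfact MM hMM
end
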